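/- arXiv:1810.08204 — 4 statements merged into one kernel-verified Lean document; each statement's English description precedes it below -/
import Mathlib

section
/- Theorem 1 (existence of canonical string operators, abstract core). Let P be a finite set of plaquettes and δ a fixed configuration (the flip pattern α^P of a path P). Assume the consistency condition: for every configuration i and any two finite lists L, L' of plaquettes from P (repetitions allowed) with equal total flips Σ_{p∈L} α_p = Σ_{p∈L'} α_p, one has θ_δ(i, L) = θ_δ(i, L'). Then there exists a function F : (E → ZMod 2) → ℂ with |F(c)| = 1 for all configurations c such that: (a) F(c + α_p) · b_p(c) = b_p(c + δ) · F(c) for every configuration c and every plaquette p ∈ P (so the string operator B(δ, F) commutes with every plaquette operator B(α_p, b_p)), and (b) F(c + δ) = conj(F(c)) for every configuration c (so B(δ, F) is canonical: it is self-adjoint and squares to the identity). -/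
/-!
By the consistency condition, transporting phases along flips of plaquettes in `P` is path
independent. Fixing a base point in each coset of the subgroup spanned by the flips and
transporting from it gives a unit function `F₀` satisfying (a). The product
`w c = F₀ c * F₀ (c + δ)` is invariant under `c ↦ c + δ` and under every flip `α_p` (the factors
picked up at `c` and at `c + δ` are inverse to each other), so dividing `F₀` by a square root `s`
of `w` preserves (a), and also yields (b): `F₀ (c + δ) / s = s / F₀ c = conj (F₀ c / s)`.
-/

/-- A plaquette: a flip pattern `α_p` together with a unit-modulus phase function `b_p`. -/
structure Plaquette (E : Type*) where
  flip : E → ZMod 2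
  phase : (E → ZMod 2) → ℂ
  unit_phase : ∀ c, ‖phase c‖ = 1

/-- `theta δ i [p₁, …, p_m] = ∏_k b_{p_k}(i + δ + α_{p₁} + ⋯ + α_{p_{k-1}}) /
    b_{p_k}(i + α_{p₁} + ⋯ + α_{p_{k-1}})` (Eq. (21) of the paper). -/
noncomputable def theta {E : Type*} (δ : E → ZMod 2) :
    (E → ZMod 2) → List (Plaquette E) → ℂ
  | _, [] => 1
  | i, p :: L => (p.phase (i + δ) / p.phase i) * theta δ (i + p.flip) L

section

variable {E : Type*}

theorem ne_zero_of_norm_eq_one {F : Type*} [NormedAddGroup F] {z : F} (h : ‖z‖ = 1) : z ≠ 0 :=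
  norm_ne_zero_iff.mp (h ▸ one_ne_zero)

theorem Plaquette.phase_ne_zero (p : Plaquette E) (c : E → ZMod 2) : p.phase c ≠ 0 :=
  ne_zero_of_norm_eq_one (p.unit_phase c)

theorem Pi.zmodTwo_add_cancel_right (a b : E → ZMod 2) : a + b + b = a :=
  funext fun e => CharTwo.add_cancel_right (a e) (b e)

section Theta

variable (δ : E → ZMod 2)

theorem theta_append (i : E → ZMod 2) (L L' : List (Plaquette E)) :
    theta δ i (L ++ L') = theta δ i L * theta δ (i + (L.map Plaquette.flip).sum) L' := by
  induction L generalizing i with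
  | nil => simp [theta]
  | cons p L ih => rw [List.cons_append, theta, theta, ih, mul_assoc]; simp [add_assoc]

theorem theta_singleton (i : E → ZMod 2) (p : Plaquette E) :
    theta δ i [p] = p.phase (i + δ) / p.phase i := by
  simp [theta]

theorem norm_theta (i : E → ZMod 2) (L : List (Plaquette E)) : ‖theta δ i L‖ = 1 := by
  induction L generalizing i with
  | nil => simp [theta]
  | cons p L ih => simp [theta, p.unit_phase, ih]

end Theta

def flipSpan (P : Finset (Plaquette E)) : AddSubgroup (E → ZMod 2) where
  carrier := {a | ∃ L : List (Plaquette E), (∀ p ∈ L, p ∈ P) ∧ (L.map Plaquette.flip).sum = a}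
  zero_mem' := ⟨[], by simp⟩
  add_mem' := by
    rintro _ _ ⟨L, hL, rfl⟩ ⟨L', hL', rfl⟩
    exact ⟨L ++ L', by simpa [or_imp, forall_and] using And.intro hL hL', by simp⟩
  neg_mem' := by
    rintro _ ⟨L, hL, rfl⟩
    exact ⟨L, hL, funext fun e => (ZMod.neg_eq_self_mod_two _).symm⟩

theorem flip_mem_flipSpan {P : Finset (Plaquette E)} {p : Plaquette E} (hp : p ∈ P) :
    p.flip ∈ flipSpan P :=
  ⟨[p], by simpa using hp, by simp⟩

def ThetaConsistent (δ : E → ZMod 2) (P : Finset (Plaquette E)) : Prop :=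
  ∀ (i : E → ZMod 2) (L L' : List (Plaquette E)), (∀ p ∈ L, p ∈ P) → (∀ p ∈ L', p ∈ P) →
    (L.map Plaquette.flip).sum = (L'.map Plaquette.flip).sum → theta δ i L = theta δ i L'

/-- On basis vectors, this is `B(δ, F) B(α_p, b_p) = B(α_p, b_p) B(δ, F)` for all `p ∈ P`. -/
def CommutesWithPlaquettes (δ : E → ZMod 2) (P : Finset (Plaquette E))
    (F : (E → ZMod 2) → ℂ) : Prop :=
  ∀ c, ∀ p ∈ P, F (c + p.flip) * p.phase c = p.phase (c + δ) * F c

variable {δ : E → ZMod 2} {P : Finset (Plaquette E)}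

theorem ThetaConsistent.exists_unit_commutesWithPlaquettes (hcons : ThetaConsistent δ P) :
    ∃ F : (E → ZMod 2) → ℂ, (∀ c, ‖F c‖ = 1) ∧ CommutesWithPlaquettes δ P F := by
  let base (c : E → ZMod 2) : E → ZMod 2 := (c : (E → ZMod 2) ⧸ flipSpan P).out
  have hpath (c) : ∃ L : List (Plaquette E), (∀ p ∈ L, p ∈ P) ∧
      base c + (L.map Plaquette.flip).sum = c := by
    obtain ⟨⟨_, L, hL, rfl⟩, hout⟩ := QuotientAddGroup.mk_out_eq_add (flipSpan P) c
    exact ⟨L, hL, (congrArg (· + _) hout).trans (Pi.zmodTwo_add_cancel_right _ _)⟩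
  choose L hLP hLsum using hpath
  refine ⟨fun c => theta δ (base c) (L c), fun c => norm_theta δ _ _, fun c p hp => ?_⟩
  have hbase : base (c + p.flip) = base c :=
    congrArg Quotient.out (QuotientAddGroup.mk_add_of_mem c (flip_mem_flipSpan hp))
  have hsum : ((L (c + p.flip)).map Plaquette.flip).sum =
      ((L c ++ [p]).map Plaquette.flip).sum := by
    apply add_left_cancel (a := base c)
    rw [← hbase, hLsum, List.map_append, List.sum_append, ← add_assoc, hbase, hLsum]
    simp
  have hLP' : ∀ q ∈ L c ++ [p], q ∈ P := by
    simpa [or_imp, forall_and] using And.intro (hLP c) hp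
  beta_reduce
  rw [hbase, hcons _ _ _ (hLP _) hLP' hsum, theta_append, hLsum, theta_singleton, mul_assoc,
    div_mul_cancel₀ _ (p.phase_ne_zero c), mul_comm]

theorem CommutesWithPlaquettes.mul_add_delta_add_flip {F : (E → ZMod 2) → ℂ}
    (hF : CommutesWithPlaquettes δ P F) (c : E → ZMod 2) {p : Plaquette E} (hp : p ∈ P) :
    F (c + p.flip) * F (c + p.flip + δ) = F c * F (c + δ) := by
  have h := hF c p hp
  have h' := hF (c + δ) p hp
  rw [Pi.zmodTwo_add_cancel_right, add_right_comm] at h'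
  apply mul_left_cancel₀ (mul_ne_zero (p.phase_ne_zero c) (p.phase_ne_zero (c + δ)))
  linear_combination F (c + p.flip + δ) * p.phase (c + δ) * h + p.phase (c + δ) * F c * h'

theorem CommutesWithPlaquettes.div {F s : (E → ZMod 2) → ℂ} (hF : CommutesWithPlaquettes δ P F)
    (hs : ∀ c, ∀ p ∈ P, s (c + p.flip) = s c) :
    CommutesWithPlaquettes δ P (fun c => F c / s c) := by
  intro c p hp
  simp only [hs c p hp, div_mul_eq_mul_div, hF c p hp, mul_div_assoc]

theorem Complex.div_eq_conj_div_of_sq_eq_mul {a b s : ℂ} (ha : ‖a‖ = 1) (hs : ‖s‖ = 1)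
    (h : s ^ 2 = a * b) : b / s = starRingEnd ℂ (a / s) := by
  rw [map_div₀, ← Complex.inv_eq_conj ha, ← Complex.inv_eq_conj hs, inv_div_inv,
    div_eq_div_iff (ne_zero_of_norm_eq_one hs) (ne_zero_of_norm_eq_one ha), ← sq, h, mul_comm]

theorem CommutesWithPlaquettes.exists_canonical {F₀ : (E → ZMod 2) → ℂ}
    (hF₀ : CommutesWithPlaquettes δ P F₀) (hF₀_norm : ∀ c, ‖F₀ c‖ = 1) :
    ∃ F : (E → ZMod 2) → ℂ, (∀ c, ‖F c‖ = 1) ∧ CommutesWithPlaquettes δ P F ∧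
      ∀ c, F (c + δ) = starRingEnd ℂ (F c) := by
  let s c := (F₀ c * F₀ (c + δ)) ^ (2⁻¹ : ℂ)
  have hs_sq c : s c ^ 2 = F₀ c * F₀ (c + δ) := Complex.cpow_nat_inv_pow _ two_ne_zero
  have hs_norm c : ‖s c‖ = 1 := by
    rw [← pow_eq_one_iff_of_nonneg (norm_nonneg _) two_ne_zero, ← norm_pow, hs_sq, norm_mul,
      hF₀_norm, hF₀_norm, one_mul]
  have hs_delta c : s (c + δ) = s c := by
    simp only [s, Pi.zmodTwo_add_cancel_right, mul_comm (F₀ (c + δ))]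
  refine ⟨fun c => F₀ c / s c, fun c => by rw [norm_div, hF₀_norm, hs_norm, div_one],
    hF₀.div fun c p hp => congrArg (· ^ (2⁻¹ : ℂ)) (hF₀.mul_add_delta_add_flip c hp),
    fun c => ?_⟩
  show F₀ (c + δ) / s (c + δ) = starRingEnd ℂ (F₀ c / s c)
  rw [hs_delta]
  exact Complex.div_eq_conj_div_of_sq_eq_mul (hF₀_norm c) (hs_norm c) (hs_sq c)

end

theorem canonical_string_operator_exists_general {E : Type*}
    (δ : E → ZMod 2) (P : Finset (Plaquette E))
    (hcons : ∀ (i : E → ZMod 2) (L L' : List (Plaquette E)),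
      (∀ p ∈ L, p ∈ P) → (∀ p ∈ L', p ∈ P) →
      (L.map Plaquette.flip).sum = (L'.map Plaquette.flip).sum →
      theta δ i L = theta δ i L') :
    ∃ F : (E → ZMod 2) → ℂ,
      (∀ c, ‖F c‖ = 1) ∧
      (∀ c, ∀ p ∈ P, F (c + p.flip) * p.phase c = p.phase (c + δ) * F c) ∧
      (∀ c, F (c + δ) = starRingEnd ℂ (F c)) := by
  obtain ⟨F₀, hF₀_norm, hF₀⟩ := ThetaConsistent.exists_unit_commutesWithPlaquettes hcons
  exact hF₀.exists_canonical hF₀_norm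

/-- Theorem 1 (existence of canonical string operators, abstract core). -/
theorem canonical_string_operator_exists {E : Type*} [Fintype E] [DecidableEq E]
    (δ : E → ZMod 2) (P : Finset (Plaquette E))
    (hcons : ∀ (i : E → ZMod 2) (L L' : List (Plaquette E)),
      (∀ p ∈ L, p ∈ P) → (∀ p ∈ L', p ∈ P) →
      (L.map Plaquette.flip).sum = (L'.map Plaquette.flip).sum →
      theta δ i L = theta δ i L') :
    ∃ F : (E → ZMod 2) → ℂ,
      (∀ c, ‖F c‖ = 1) ∧
      (∀ c, ∀ p ∈ P, F (c + p.flip) * p.phase c = p.phase (c + δ) * F c) ∧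
      (∀ c, F (c + δ) = starRingEnd ℂ (F c)) :=
  canonical_string_operator_exists_general δ P hcons
end

section
/- Lemma 1 (order independence of θ). Let p₁, …, p_m be plaquettes whose plaquette operators pairwise commute, equivalently b_{p_i}(c + α_{p_j}) · b_{p_j}(c) = b_{p_j}(c + α_{p_i}) · b_{p_i}(c) for all configurations c and all indices i, j. Then for every configuration i, every configuration δ, and every permutation σ of {1, …, m}: θ_δ(i, [p₁, …, p_m]) = θ_δ(i, [p_{σ(1)}, …, p_{σ(m)}]). -/
/-! Viewing `theta δ · L` as a right fold of one step per plaquette, order independence is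
`List.Perm.foldr_eq'`: commuting plaquette operators give left-commuting steps, because the
numerators of two consecutive factors are the commutation relation at `i + δ` and the
denominators the one at `i`. -/

namespace Plaquette

variable {E : Type*}

/-- The commutation relation `B(α_p, b_p) B(α_q, b_q) = B(α_q, b_q) B(α_p, b_p)`, read off on
basis vectors. -/
def Commute (p q : Plaquette E) : Prop :=
  ∀ c : E → ZMod 2, p.phase (c + q.flip) * q.phase c = q.phase (c + p.flip) * p.phase c

noncomputable def thetaStep (δ : E → ZMod 2) (p : Plaquette E) (F : (E → ZMod 2) → ℂ) :
    (E → ZMod 2) → ℂ :=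
  fun i ↦ p.phase (i + δ) / p.phase i * F (i + p.flip)

theorem thetaStep_left_comm {p q : Plaquette E} (h : p.Commute q) (δ : E → ZMod 2)
    (F : (E → ZMod 2) → ℂ) :
    thetaStep δ q (thetaStep δ p F) = thetaStep δ p (thetaStep δ q F) := by
  funext i
  have hflip : i + p.flip + q.flip = i + q.flip + p.flip := add_right_comm _ _ _
  have hnum : q.phase (i + δ) * p.phase (i + q.flip + δ)
      = p.phase (i + δ) * q.phase (i + p.flip + δ) := by
    have h' := h (i + δ)
    rw [add_right_comm i δ, add_right_comm i δ] at h'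
    linear_combination h'
  have hden : q.phase i * p.phase (i + q.flip) = p.phase i * q.phase (i + p.flip) := by
    linear_combination h i
  simp only [thetaStep, hflip, ← mul_assoc, div_mul_div_comm, hnum, hden]

end Plaquette

theorem theta_eq_foldr {E : Type*} (δ : E → ZMod 2) (L : List (Plaquette E)) :
    (theta δ · L) = L.foldr (Plaquette.thetaStep δ) 1 := by
  induction L with
  | nil => rfl
  | cons p L ih =>
    funext i
    simp only [theta, List.foldr_cons, Plaquette.thetaStep, ← ih]

theorem theta_perm_invariant_general {E : Type*}
    (δ : E → ZMod 2) (L L' : List (Plaquette E)) (hperm : L.Perm L')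
    (hcomm : ∀ p ∈ L, ∀ q ∈ L, ∀ c : E → ZMod 2,
      p.phase (c + q.flip) * q.phase c = q.phase (c + p.flip) * p.phase c)
    (i : E → ZMod 2) :
    theta δ i L = theta δ i L' := by
  have hfold : L.foldr (Plaquette.thetaStep δ) 1 = L'.foldr (Plaquette.thetaStep δ) 1 :=
    hperm.foldr_eq' (fun p hp q hq F ↦ Plaquette.thetaStep_left_comm (hcomm p hp q hq) δ F) 1
  exact congrFun ((theta_eq_foldr δ L).trans (hfold.trans (theta_eq_foldr δ L').symm)) i

/-- Lemma 1 (order independence of θ): if the plaquette operators of the plaquettes in the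
list `L` pairwise commute — equivalently `b_p(c + α_q) · b_q(c) = b_q(c + α_p) · b_p(c)` for
all configurations `c` — then `θ_δ(i, L)` is invariant under permutations of `L`. -/
theorem theta_perm_invariant {E : Type*} [Fintype E] [DecidableEq E]
    (δ : E → ZMod 2) (L L' : List (Plaquette E)) (hperm : L.Perm L')
    (hcomm : ∀ p ∈ L, ∀ q ∈ L, ∀ c : E → ZMod 2,
      p.phase (c + q.flip) * q.phase c = q.phase (c + p.flip) * p.phase c)
    (i : E → ZMod 2) :
    theta δ i L = theta δ i L' :=
  theta_perm_invariant_general δ L L' hperm hcomm i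
end

section
/- Lemma 2. Let {p₁, …, p_m}, {q₁, …, q_k}, {r₁, …, r_s} be three finite families of plaquettes such that: all plaquette operators involved pairwise commute; each squares to the identity, i.e. b(c + α) · b(c) = 1 for each of these plaquettes (α, b) and all configurations c; the operator identity (∏_{i=1}^m B(α_{p_i}, b_{p_i})) ∘ (∏_{j=1}^k B(α_{q_j}, b_{q_j})) ∘ (∏_{l=1}^s B(α_{r_l}, b_{r_l})) = id holds on H; and each b_{r_l} satisfies b_{r_l}(c + δ) = b_{r_l}(c) for all configurations c (i.e. the flip operator X_δ : δ_c ↦ δ_{c+δ} commutes with each B(α_{r_l}, b_{r_l})). Then θ_δ(i, [p₁, …, p_m]) = θ_δ(i, [q₁, …, q_k]) for every configuration i. -/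
/-- The string-type operator `B(α, F)`, acting on the Hilbert space
`H = EuclideanSpace ℂ (E → ZMod 2)` by `(B(α,F) ψ)(c) = F(c + α) ⬝ ψ(c + α)`,
i.e. `B(α,F) δ_c = F(c) • δ_{c+α}`. -/
noncomputable def stringOp {E : Type*} [Fintype E] [DecidableEq E]
    (α : E → ZMod 2) (F : (E → ZMod 2) → ℂ) :
    EuclideanSpace ℂ (E → ZMod 2) →ₗ[ℂ] EuclideanSpace ℂ (E → ZMod 2) where
  toFun ψ := WithLp.toLp 2 (fun c => F (c + α) * ψ (c + α))
  map_add' ψ φ := by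
    ext c
    simp [mul_add]
  map_smul' a ψ := by
    ext c
    simp [mul_comm, mul_left_comm, mul_assoc]

/-! Let `B_L` be the product of the plaquette operators of a list `L` and `X` the flip by `δ`.
Conjugation by `X` shifts every phase by `δ`, and since each plaquette operator is an
involution, `X B_L X B_L` is the diagonal operator with entries `θ_δ(c, L)⁻¹`. The hypotheses
give `B_Pl = B_Ql B_Rl` with `B_Rl` an involution commuting with `X` and `B_Ql`, so `B_Rl`
cancels from `X B_Pl X B_Pl`, which therefore equals `X B_Ql X B_Ql`. -/

section Configurations

variable {E : Type*}

theorem config_add_self (x : E → ZMod 2) : x + x = 0 :=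
  funext fun _ => CharTwo.add_self_eq_zero _

theorem config_add_cancel_right (x y : E → ZMod 2) : x + y + y = x := by
  rw [add_assoc, config_add_self, add_zero]

end Configurations

section Monoid

variable {M : Type*} [Monoid M]

theorem List.prod_mul_self_eq_one {l : List M} (hcomm : ∀ a ∈ l, ∀ b ∈ l, Commute a b)
    (hinv : ∀ a ∈ l, a * a = 1) : l.prod * l.prod = 1 := by
  induction l with
  | nil => simp
  | cons a l ih =>
    have ha : Commute a l.prod :=
      Commute.list_prod_right _ _ fun b hb => hcomm a (by simp) b (by simp [hb])
    have hl : l.prod * l.prod = 1 :=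
      ih (fun a ha b hb => hcomm a (by simp [ha]) b (by simp [hb]))
        fun b hb => hinv b (by simp [hb])
    rw [List.prod_cons, ha.symm.mul_mul_mul_comm, hinv a (by simp), hl, one_mul]

theorem conj_mul_eq_of_mul_mul_eq_one {x p q r : M} (h : p * q * r = 1) (hp : p * p = 1)
    (hr : r * r = 1) (hqr : Commute q r) (hxr : Commute x r) :
    x * p * x * p = x * q * x * q := by
  have hpqr : p = q * r := by
    calc p = p * (p * q * r) := by rw [h, mul_one]
      _ = q * r := by simp only [← mul_assoc, hp, one_mul]
  calc x * p * x * p = x * q * (r * x * r) * q := by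
        rw [hpqr]; nth_rewrite 2 [hqr.eq]; simp only [mul_assoc]
    _ = x * q * x * q := by rw [← hxr.eq, mul_assoc x r r, hr, mul_one]

end Monoid

section StringOperators

variable {E : Type*} [Fintype E] [DecidableEq E]

theorem stringOp_apply (α : E → ZMod 2) (F : (E → ZMod 2) → ℂ)
    (ψ : EuclideanSpace ℂ (E → ZMod 2)) (c : E → ZMod 2) :
    stringOp α F ψ c = F (c + α) * ψ (c + α) := rfl

theorem stringOp_mul_stringOp (α β : E → ZMod 2) (F G : (E → ZMod 2) → ℂ) :
    stringOp α F * stringOp β G = stringOp (α + β) (fun c => F (c + β) * G c) := by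
  ext ψ c
  simp only [Module.End.mul_apply, stringOp_apply, ← add_assoc, config_add_cancel_right,
    mul_assoc]

theorem stringOp_zero_one : stringOp (0 : E → ZMod 2) 1 = 1 := by
  ext ψ c
  simp [stringOp_apply]

theorem stringOp_zero_injective :
    Function.Injective (stringOp (0 : E → ZMod 2)) := by
  intro F G h
  funext c
  simpa [stringOp_apply] using
    congrArg (fun T : Module.End ℂ _ => T (EuclideanSpace.single c 1) c) h

theorem commute_stringOp {α β : E → ZMod 2} {F G : (E → ZMod 2) → ℂ}
    (h : ∀ c, F (c + β) * G c = G (c + α) * F c) :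
    Commute (stringOp α F) (stringOp β G) := by
  rw [Commute, SemiconjBy, stringOp_mul_stringOp, stringOp_mul_stringOp, add_comm β]
  exact congrArg _ (funext h)

theorem stringOp_mul_self {α : E → ZMod 2} {F : (E → ZMod 2) → ℂ}
    (h : ∀ c, F (c + α) * F c = 1) : stringOp α F * stringOp α F = 1 := by
  rw [stringOp_mul_stringOp, config_add_self, ← stringOp_zero_one]
  exact congrArg _ (funext h)

end StringOperators

section Plaquettes

variable {E : Type*} [Fintype E] [DecidableEq E]

noncomputable def flipOp (δ : E → ZMod 2) : Module.End ℂ (EuclideanSpace ℂ (E → ZMod 2)) :=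
  stringOp δ 1

theorem flipOp_mul_self (δ : E → ZMod 2) : flipOp δ * flipOp δ = 1 :=
  stringOp_mul_self fun _ => mul_one _

theorem flipOp_mul_stringOp_mul_flipOp (δ α : E → ZMod 2) (F : (E → ZMod 2) → ℂ) :
    flipOp δ * stringOp α F * flipOp δ = stringOp α (fun c => F (c + δ)) := by
  rw [flipOp, stringOp_mul_stringOp, stringOp_mul_stringOp, add_comm δ α, config_add_cancel_right]
  simp

theorem commute_flipOp_stringOp {δ α : E → ZMod 2} {F : (E → ZMod 2) → ℂ}
    (h : ∀ c, F (c + δ) = F c) : Commute (flipOp δ) (stringOp α F) :=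
  commute_stringOp fun c => by simp [h]

noncomputable def prodOp (L : List (Plaquette E)) :
    Module.End ℂ (EuclideanSpace ℂ (E → ZMod 2)) :=
  (L.map fun p => stringOp p.flip p.phase).prod

theorem prodOp_cons (p : Plaquette E) (L : List (Plaquette E)) :
    prodOp (p :: L) = stringOp p.flip p.phase * prodOp L := by
  simp [prodOp]

theorem flipOp_mul_prodOp_mul_flipOp (δ : E → ZMod 2) (L : List (Plaquette E))
    (hsq : ∀ p ∈ L, ∀ c, p.phase (c + p.flip) * p.phase c = 1) :
    flipOp δ * prodOp L * flipOp δ = stringOp 0 (fun c => (theta δ c L)⁻¹) * prodOp L := by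
  induction L with
  | nil =>
    rw [prodOp, List.map_nil, List.prod_nil, mul_one, mul_one, flipOp_mul_self]
    simp only [theta, inv_one]
    exact stringOp_zero_one.symm
  | cons p L ih =>
    have hflip : ∀ c, p.phase (c + p.flip) = (p.phase c)⁻¹ := fun c =>
      eq_inv_of_mul_eq_one_left (hsq p (by simp) c)
    have hne : ∀ c, p.phase c ≠ 0 := fun c => right_ne_zero_of_mul_eq_one (hsq p (by simp) c)
    calc flipOp δ * prodOp (p :: L) * flipOp δ
        = flipOp δ * stringOp p.flip p.phase * flipOp δ * (flipOp δ * prodOp L * flipOp δ) := by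
          simp only [prodOp_cons, mul_assoc]
          rw [← mul_assoc (flipOp δ) (flipOp δ), flipOp_mul_self, one_mul]
      _ = stringOp p.flip (fun c => p.phase (c + δ)) * stringOp 0 (fun c => (theta δ c L)⁻¹) *
            prodOp L := by
          rw [flipOp_mul_stringOp_mul_flipOp, ih fun q hq => hsq q (by simp [hq]), mul_assoc]
      _ = stringOp 0 (fun c => (theta δ c (p :: L))⁻¹) * stringOp p.flip p.phase *
            prodOp L := by
          rw [stringOp_mul_stringOp, stringOp_mul_stringOp, add_zero, zero_add]
          congr 2
          funext c
          rw [theta, config_add_cancel_right, add_zero, add_right_comm c p.flip δ, hflip, hflip]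
          field_simp [hne]
      _ = stringOp 0 (fun c => (theta δ c (p :: L))⁻¹) * prodOp (p :: L) := by
          rw [prodOp_cons, mul_assoc]

theorem commute_prodOp {L M : List (Plaquette E)}
    (h : ∀ p ∈ L, ∀ q ∈ M, Commute (stringOp p.flip p.phase) (stringOp q.flip q.phase)) :
    Commute (prodOp L) (prodOp M) :=
  Commute.list_prod_left _ _ <| List.forall_mem_map.2 fun p hp =>
    Commute.list_prod_right _ _ <| List.forall_mem_map.2 fun q hq => h p hp q hq

theorem commute_flipOp_prodOp {δ : E → ZMod 2} {L : List (Plaquette E)}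
    (h : ∀ p ∈ L, ∀ c, p.phase (c + δ) = p.phase c) : Commute (flipOp δ) (prodOp L) :=
  Commute.list_prod_right _ _ <| List.forall_mem_map.2 fun p hp =>
    commute_flipOp_stringOp (h p hp)

theorem prodOp_mul_self {L : List (Plaquette E)}
    (hcomm : ∀ p ∈ L, ∀ q ∈ L, Commute (stringOp p.flip p.phase) (stringOp q.flip q.phase))
    (hsq : ∀ p ∈ L, ∀ c, p.phase (c + p.flip) * p.phase c = 1) :
    prodOp L * prodOp L = 1 :=
  List.prod_mul_self_eq_one
    (List.forall_mem_map.2 fun p hp => List.forall_mem_map.2 fun q hq => hcomm p hp q hq)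
    (List.forall_mem_map.2 fun p hp => stringOp_mul_self (hsq p hp))

end Plaquettes

/-- Lemma 2: if the plaquette operators of three families `Pl`, `Ql`, `Rl` pairwise commute,
each squares to the identity, their total product is the identity, and each member of `Rl`
has a `δ`-translation-invariant phase (so that the flip operator `X_δ` commutes with it),
then `θ_δ(i, Pl) = θ_δ(i, Ql)` for every configuration `i`. -/
theorem theta_eq_of_total_product_eq_one {E : Type*} [Fintype E] [DecidableEq E]
    (δ : E → ZMod 2) (Pl Ql Rl : List (Plaquette E))
    (hcomm : ∀ p ∈ Pl ++ Ql ++ Rl, ∀ q ∈ Pl ++ Ql ++ Rl, ∀ c : E → ZMod 2,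
      p.phase (c + q.flip) * q.phase c = q.phase (c + p.flip) * p.phase c)
    (hsq : ∀ p ∈ Pl ++ Ql ++ Rl, ∀ c : E → ZMod 2, p.phase (c + p.flip) * p.phase c = 1)
    (hprod : (Pl.map fun p => stringOp p.flip p.phase).prod *
             (Ql.map fun p => stringOp p.flip p.phase).prod *
             (Rl.map fun p => stringOp p.flip p.phase).prod = 1)
    (hR : ∀ r ∈ Rl, ∀ c : E → ZMod 2, r.phase (c + δ) = r.phase c)
    (i : E → ZMod 2) :
    theta δ i Pl = theta δ i Ql := by
  have hcommOp : ∀ p ∈ Pl ++ Ql ++ Rl, ∀ q ∈ Pl ++ Ql ++ Rl,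
      Commute (stringOp p.flip p.phase) (stringOp q.flip q.phase) :=
    fun p hp q hq => commute_stringOp (hcomm p hp q hq)
  have hinv {L : List (Plaquette E)} (hL : L ⊆ Pl ++ Ql ++ Rl) : prodOp L * prodOp L = 1 :=
    prodOp_mul_self (fun p hp q hq => hcommOp p (hL hp) q (hL hq)) fun p hp => hsq p (hL hp)
  have hdiag {L : List (Plaquette E)} (hL : L ⊆ Pl ++ Ql ++ Rl) :
      flipOp δ * prodOp L * flipOp δ * prodOp L = stringOp 0 (fun c => (theta δ c L)⁻¹) := by
    rw [flipOp_mul_prodOp_mul_flipOp δ L fun p hp => hsq p (hL hp), mul_assoc, hinv hL, mul_one]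
  have key : flipOp δ * prodOp Pl * flipOp δ * prodOp Pl =
      flipOp δ * prodOp Ql * flipOp δ * prodOp Ql :=
    conj_mul_eq_of_mul_mul_eq_one hprod (hinv (by simp)) (hinv (by simp))
      (commute_prodOp fun p hp q hq => hcommOp p (by simp [hp]) q (by simp [hq]))
      (commute_flipOp_prodOp hR)
  rw [hdiag (by simp), hdiag (by simp)] at key
  exact inv_injective (congrFun (stringOp_zero_injective key) i)
end

section
/- Lemma 8 (abstract form: the crossing ratio R expressed through θ). For a ∈ {1, …, m} let S_{P_a} = B(α^{P_a}, F_{P_a}) and for b ∈ {1, …, n} let S_{Q_b} = B(α^{Q_b}, F_{Q_b}) be string-type operators with |F_{P_a}(c)| = |F_{Q_b}(c)| = 1 for all c; set α^P := Σ_{a=1}^m α^{P_a} and α^Q := Σ_{b=1}^n α^{Q_b}. Suppose that for each a there is a finite list L_a of plaquettes with Σ_{p∈L_a} α_p = α^Q and F_{P_a}(x + α^Q) = θ_{α^{P_a}}(x, L_a) · F_{P_a}(x) for every configuration x, and for each b there is a finite list M_b of plaquettes with Σ_{q∈M_b} α_q = α^P and F_{Q_b}(x + α^P) = θ_{α^{Q_b}}(x,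 M_b) · F_{Q_b}(x) for every configuration x. Then for every configuration i, the ratio R(i) := ( ∏_{a=1}^m F_{P_a}(i + α^Q + Σ_{j<a} α^{P_j}) · ∏_{b=1}^n F_{Q_b}(i + Σ_{j'<b} α^{Q_{j'}}) ) / ( ∏_{a=1}^m F_{P_a}(i + Σ_{j<a} α^{P_j}) · ∏_{b=1}^n F_{Q_b}(i + α^P + Σ_{j'<b} α^{Q_{j'}}) ) equals ∏_{a=1}^m θ_{α^{P_a}}(i + Σ_{j<a} α^{P_j}, L_a) · ∏_{b=1}^n (θ_{α^{Q_b}}(i + Σ_{j'<b} α^{Q_{j'}}, M_b))⁻¹. -/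
theorem Finset.prod_div_prod_eq_of_eq_mul {ι K : Type*} [CommGroupWithZero K] (s : Finset ι)
    {f g θ : ι → K} (hg : ∀ a ∈ s, g a = θ a * f a) (hf : ∀ a ∈ s, f a ≠ 0) :
    (∏ a ∈ s, g a) / ∏ a ∈ s, f a = ∏ a ∈ s, θ a := by
  rw [← Finset.prod_div_distrib]
  exact Finset.prod_congr rfl fun a ha => by rw [hg a ha, mul_div_cancel_right₀ _ (hf a ha)]

theorem crossing_ratio_via_theta_general {E : Type*} {m n : ℕ}
    (Pα : Fin m → (E → ZMod 2)) (PF : Fin m → ((E → ZMod 2) → ℂ))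
    (Qα : Fin n → (E → ZMod 2)) (QF : Fin n → ((E → ZMod 2) → ℂ))
    (hPF : ∀ a c, ‖PF a c‖ = 1)
    (hQF : ∀ b c, ‖QF b c‖ = 1)
    (L : Fin m → List (Plaquette E)) (M : Fin n → List (Plaquette E))
    (hLrec : ∀ a, ∀ x : E → ZMod 2,
      PF a (x + ∑ b : Fin n, Qα b) = theta (Pα a) x (L a) * PF a x)
    (hMrec : ∀ b, ∀ x : E → ZMod 2,
      QF b (x + ∑ a : Fin m, Pα a) = theta (Qα b) x (M b) * QF b x)
    (i : E → ZMod 2) :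
    ((∏ a : Fin m, PF a (i + (∑ b : Fin n, Qα b) +
        ∑ j ∈ Finset.univ.filter (fun j => j < a), Pα j)) *
     (∏ b : Fin n, QF b (i + ∑ j' ∈ Finset.univ.filter (fun j' => j' < b), Qα j'))) /
    ((∏ a : Fin m, PF a (i + ∑ j ∈ Finset.univ.filter (fun j => j < a), Pα j)) *
     (∏ b : Fin n, QF b (i + (∑ a : Fin m, Pα a) +
        ∑ j' ∈ Finset.univ.filter (fun j' => j' < b), Qα j'))) =
    (∏ a : Fin m, theta (Pα a)
        (i + ∑ j ∈ Finset.univ.filter (fun j => j < a), Pα j) (L a)) *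
    (∏ b : Fin n, (theta (Qα b)
        (i + ∑ j' ∈ Finset.univ.filter (fun j' => j' < b), Qα j') (M b))⁻¹) := by
  have hP : ∀ a ∈ Finset.univ,
      PF a (i + (∑ b, Qα b) + ∑ j ∈ Finset.univ.filter (· < a), Pα j) =
      theta (Pα a) (i + ∑ j ∈ Finset.univ.filter (· < a), Pα j) (L a) *
        PF a (i + ∑ j ∈ Finset.univ.filter (· < a), Pα j) := fun a _ => by
    rw [add_right_comm]; exact hLrec a _
  have hQ : ∀ b ∈ Finset.univ,
      QF b (i + (∑ a, Pα a) + ∑ j ∈ Finset.univ.filter (· < b), Qα j) =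
      theta (Qα b) (i + ∑ j ∈ Finset.univ.filter (· < b), Qα j) (M b) *
        QF b (i + ∑ j ∈ Finset.univ.filter (· < b), Qα j) := fun b _ => by
    rw [add_right_comm]; exact hMrec b _
  rw [mul_div_mul_comm, ← inv_div (∏ b, QF b _),
    Finset.prod_div_prod_eq_of_eq_mul _ hP fun a _ => norm_ne_zero_iff.mp (by simp [hPF]),
    Finset.prod_div_prod_eq_of_eq_mul _ hQ fun b _ => norm_ne_zero_iff.mp (by simp [hQF]),
    Finset.prod_inv_distrib]

/-- Lemma 8 (abstract form: the crossing ratio `R` expressed through θ). -/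
theorem crossing_ratio_via_theta {E : Type*} [Fintype E] [DecidableEq E] {m n : ℕ}
    (Pα : Fin m → (E → ZMod 2)) (PF : Fin m → ((E → ZMod 2) → ℂ))
    (Qα : Fin n → (E → ZMod 2)) (QF : Fin n → ((E → ZMod 2) → ℂ))
    (hPF : ∀ a c, ‖PF a c‖ = 1)
    (hQF : ∀ b c, ‖QF b c‖ = 1)
    (L : Fin m → List (Plaquette E)) (M : Fin n → List (Plaquette E))
    (hLsum : ∀ a, ((L a).map Plaquette.flip).sum = ∑ b : Fin n, Qα b)
    (hLrec : ∀ a, ∀ x : E → ZMod 2,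
      PF a (x + ∑ b : Fin n, Qα b) = theta (Pα a) x (L a) * PF a x)
    (hMsum : ∀ b, ((M b).map Plaquette.flip).sum = ∑ a : Fin m, Pα a)
    (hMrec : ∀ b, ∀ x : E → ZMod 2,
      QF b (x + ∑ a : Fin m, Pα a) = theta (Qα b) x (M b) * QF b x)
    (i : E → ZMod 2) :
    ((∏ a : Fin m, PF a (i + (∑ b : Fin n, Qα b) +
        ∑ j ∈ Finset.univ.filter (fun j => j < a), Pα j)) *
     (∏ b : Fin n, QF b (i + ∑ j' ∈ Finset.univ.filter (fun j' => j' < b), Qα j'))) /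
    ((∏ a : Fin m, PF a (i + ∑ j ∈ Finset.univ.filter (fun j => j < a), Pα j)) *
     (∏ b : Fin n, QF b (i + (∑ a : Fin m, Pα a) +
        ∑ j' ∈ Finset.univ.filter (fun j' => j' < b), Qα j'))) =
    (∏ a : Fin m, theta (Pα a)
        (i + ∑ j ∈ Finset.univ.filter (fun j => j < a), Pα j) (L a)) *
    (∏ b : Fin n, (theta (Qα b)
        (i + ∑ j' ∈ Finset.univ.filter (fun j' => j' < b), Qα j') (M b))⁻¹) :=
  crossing_ratio_via_theta_general Pα PF Qα QF hPF hQF L M hLrec hMrec i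
end
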